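/- In a complete graph whose edge weights satisfy the triangle inequality, for any nonempty subset S of the vertices, the minimum weight of a Hamiltonian cycle on the complete subgraph induced by S is at most the minimum weight of a Hamiltonian cycle on the whole vertex set, provided |S| ≥ 3 and |V| ≥ 3. -/

import Mathlib

open scoped Classical

/-- Cyclic weight of a closed tour given by the vertex list `l`:
the sum of `ρ` over consecutive pairs, including the pair closing the cycle. -/
def cycWeight {V : Type*} (ρ : V → V → ℝ) (l : List V) : ℝ :=
  ((l.zip (l.rotate 1)).map fun p => ρ p.1 p.2).sum

/-- The (cyclic) list of edges of a closed tour given by the vertex list `l`. -/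
def cycEdges {V : Type*} (l : List V) : List (Sym2 V) :=
  (l.zip (l.rotate 1)).map (Function.uncurry Sym2.mk)

/-- The list of endpoints of a list of matching pairs. -/
def matchVerts {V : Type*} (M : List (V × V)) : List V :=
  M.flatMap fun p => [p.1, p.2]

/-- `M` is a perfect matching on the vertex set `X`: a partition of `X` into pairs. -/
def IsPM {V : Type*} [DecidableEq V] (X : Finset V) (M : List (V × V)) : Prop :=
  (matchVerts M).Nodup ∧ (matchVerts M).toFinset = X

/-- The weight of a matching: the sum of weights of its pairs. -/
def mWeight {V : Type*} (ρ : V → V → ℝ) (M : List (V × V)) : ℝ :=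
  (M.map fun p => ρ p.1 p.2).sum

/-- Total edge weight of a graph. -/
noncomputable def gWeight {V : Type*} [Fintype V] (f : Sym2 V → ℝ) (T : SimpleGraph V) : ℝ :=
  ∑ e ∈ T.edgeSet.toFinset, f e

/-- The weight of a walk in the graph `G` with edge weights `f`
(edges are counted with multiplicity). -/
def walkWeight {V : Type*} (G : SimpleGraph V) (f : Sym2 V → ℝ) {u v : V} (p : G.Walk u v) : ℝ :=
  (p.edges.map f).sum

/-- Shortest-path distance between `i` and `j` (metric closure of `G`). -/
noncomputable def sdist {V : Type*} (G : SimpleGraph V) (f : Sym2 V → ℝ) (i j : V) : ℝ :=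
  sInf {x | ∃ p : G.Walk i j, x = walkWeight G f p}

/-!
Shortcutting: deleting the vertices outside `S` from a Hamiltonian cycle on `V`, in cyclic
order, yields a Hamiltonian cycle on `S`, and by the triangle inequality each deleted vertex
can only decrease the weight. So every tour of `V` is dominated by a tour of `S`.
-/

section TourWeight

variable {V : Type*} (ρ : V → V → ℝ)

/-- Weight of the path from `x` through the vertices of `l` (in order) to `y`. -/
def pathWeight (x y : V) : List V → ℝ
  | [] => ρ x y
  | a :: t => ρ x a + pathWeight a y t

theorem sum_zip_cons_append_eq_pathWeight (y : V) (t : List V) (x : V) :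
    (((x :: t).zip (t ++ [y])).map fun p => ρ p.1 p.2).sum = pathWeight ρ x y t := by
  induction t generalizing x with
  | nil => simp [pathWeight]
  | cons a t ih => simp [pathWeight, ih a]

theorem cycWeight_cons (x : V) (t : List V) : cycWeight ρ (x :: t) = pathWeight ρ x x t := by
  rw [cycWeight, List.rotate_cons_succ, List.rotate_zero, sum_zip_cons_append_eq_pathWeight]

theorem pathWeight_append_cons (x y z : V) (t₁ t₂ : List V) :
    pathWeight ρ x y (t₁ ++ z :: t₂) = pathWeight ρ x z t₁ + pathWeight ρ z y t₂ := by
  induction t₁ generalizing x with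
  | nil => rfl
  | cons a t ih => simp only [List.cons_append, pathWeight, ih a]; ring

theorem cycWeight_append_cons_comm (x : V) (u v : List V) :
    cycWeight ρ (u ++ x :: v) = cycWeight ρ (x :: (v ++ u)) := by
  cases u with
  | nil => simp
  | cons y u =>
    rw [List.cons_append, cycWeight_cons, cycWeight_cons, pathWeight_append_cons,
      pathWeight_append_cons, add_comm]

theorem pathWeight_le_of_sublist (htri : ∀ i j k, ρ i j ≤ ρ i k + ρ k j)
    {t₁ t₂ : List V} (h : t₁.Sublist t₂) (x y : V) :
    pathWeight ρ x y t₁ ≤ pathWeight ρ x y t₂ := by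
  induction h generalizing x with
  | slnil => rfl
  | @cons t₁ t₂ a _ ih =>
    refine (ih x).trans ?_
    cases t₂ with
    | nil => exact htri x y a
    | cons b t =>
      simp only [pathWeight, ← add_assoc]
      exact add_le_add_left (htri x b a) _
  | cons_cons a _ ih => exact add_le_add_right (ih a) _

theorem cycWeight_nonneg (htri : ∀ i j k, ρ i j ≤ ρ i k + ρ k j) (l : List V) :
    0 ≤ cycWeight ρ l := by
  cases l with
  | nil => simp [cycWeight]
  | cons x t =>
    have hxx : 0 ≤ ρ x x := by linarith [htri x x x]
    rw [cycWeight_cons]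
    exact hxx.trans (pathWeight_le_of_sublist ρ htri (List.nil_sublist t) x x)

theorem cycWeight_le_of_sublist (htri : ∀ i j k, ρ i j ≤ ρ i k + ρ k j)
    {l₁ l₂ : List V} (h : l₁.Sublist l₂) : cycWeight ρ l₁ ≤ cycWeight ρ l₂ := by
  cases l₁ with
  | nil => exact cycWeight_nonneg ρ htri l₂
  | cons x t =>
    obtain ⟨r₁, r₂, rfl, hx, ht⟩ := List.cons_sublist_iff.mp h
    obtain ⟨u, w, rfl⟩ := List.append_of_mem hx
    have ht' : t.Sublist (w ++ r₂ ++ u) :=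
      ht.trans ((List.sublist_append_right w r₂).trans (List.sublist_append_left _ u))
    rw [List.append_assoc, List.cons_append, cycWeight_append_cons_comm, cycWeight_cons,
      cycWeight_cons]
    exact pathWeight_le_of_sublist ρ htri ht' x x

end TourWeight

theorem min_ham_on_subset_le_general {V : Type*} [Fintype V] [DecidableEq V]
    (ρ : V → V → ℝ)
    (htri : ∀ i j k, ρ i j ≤ ρ i k + ρ k j)
    (S : Finset V) :
    sInf {x | ∃ l : List V, l.Nodup ∧ l.toFinset = S ∧ x = cycWeight ρ l}
      ≤ sInf {x | ∃ l : List V, l.Nodup ∧ l.toFinset = Finset.univ ∧ x = cycWeight ρ l} := by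
  have hbdd : BddBelow {x | ∃ l : List V, l.Nodup ∧ l.toFinset = S ∧ x = cycWeight ρ l} :=
    ⟨0, by rintro _ ⟨l, -, -, rfl⟩; exact cycWeight_nonneg ρ htri l⟩
  refine le_csInf ⟨_, Finset.univ.toList, Finset.nodup_toList _, Finset.toList_toFinset _, rfl⟩ ?_
  rintro _ ⟨l, hnd, hl, rfl⟩
  have hfilter : (l.filter (· ∈ S)).toFinset = S := by
    ext v
    simp [hl]
  exact (csInf_le hbdd ⟨_, hnd.filter _, hfilter, rfl⟩).trans
    (cycWeight_le_of_sublist ρ htri List.filter_sublist)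

/-- Triangle inequality: for any subset `S` of the vertices with `|S| ≥ 3`,
the minimum weight of a Hamiltonian cycle on `S` is at most the minimum weight
of a Hamiltonian cycle on the whole vertex set. -/
theorem min_ham_on_subset_le {V : Type*} [Fintype V] [DecidableEq V]
    (ρ : V → V → ℝ) (hnn : ∀ i j, 0 ≤ ρ i j) (hsym : ∀ i j, ρ i j = ρ j i)
    (htri : ∀ i j k, ρ i j ≤ ρ i k + ρ k j)
    (hV : 3 ≤ Fintype.card V) (S : Finset V) (hS : 3 ≤ S.card) :
    sInf {x | ∃ l : List V, l.Nodup ∧ l.toFinset = S ∧ x = cycWeight ρ l}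
      ≤ sInf {x | ∃ l : List V, l.Nodup ∧ l.toFinset = Finset.univ ∧ x = cycWeight ρ l} :=
  min_ham_on_subset_le_general ρ htri S
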